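/- Let ε ≥ 0, c ≥ 0, let v be a value of the matrix game certified by optimal strategies, and let â be observed payoffs making (i, j, â) a repeated game with error cε. If limsup_{t→∞} r̂₁(t) ≤ ε and limsup_{t→∞} r̂₂(t) ≤ ε, then liminf_{t→∞} u(σ̂₁(t), br) ≥ v − 2(c+1)ε and limsup_{t→∞} u(br, σ̂₂(t)) ≤ v + 2(c+1)ε, where the best-response utilities are computed with respect to the exact payoff matrix a. (Proposition 6, inequalities (7).) -/

import Mathlib

/-!
Write `X i₀ = ∑ₛ â s i₀ (j s)` and `Y j₀ = ∑ₛ â s (i s) j₀` for the cumulative observed payoffs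
over the first `t` rounds, so that `t (r̂₁ + r̂₂) = max X - min Y`. Averaging `Y` against the
optimal `q*` gives `min Y ≤ t v + E`, where `E` is the accumulated observation error; hence every
row satisfies `∑ₛ a i₀ (j s) ≤ X i₀ + E ≤ t v + t (r̂₁ + r̂₂) + 2 E`, i.e.
`u(br, σ̂₂(t)) ≤ v + r̂₁ + r̂₂ + 2 E / t`, and symmetrically with `p*`. The error is at most `1`
before `t₀` and at most `c ε` afterwards, so `E / t ≤ c ε + t₀ / t`, and letting `t → ∞` gives
the bounds.
-/

open Finset Filter

section MixedStrategy

variable {κ : Type*} [Fintype κ] {q : κ → ℝ}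

theorem inf'_le_sum_mul [Nonempty κ] (hq : q ∈ stdSimplex ℝ κ) (f : κ → ℝ) :
    univ.inf' univ_nonempty f ≤ ∑ k, q k * f k := by
  have := inf_le_centerMass (s := univ) (f := f) (fun k _ => hq.1 k) (by simp [hq.2])
  rwa [centerMass_eq_of_sum_1 _ _ hq.2] at this

theorem sum_mul_le_sup' [Nonempty κ] (hq : q ∈ stdSimplex ℝ κ) (f : κ → ℝ) :
    ∑ k, q k * f k ≤ univ.sup' univ_nonempty f := by
  have := centerMass_le_sup (s := univ) (f := f) (fun k _ => hq.1 k) (by simp [hq.2])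
  rwa [centerMass_eq_of_sum_1 _ _ hq.2] at this

theorem sum_mul_le_sum_mul_add (hq : q ∈ stdSimplex ℝ κ) {x y : κ → ℝ} {δ : ℝ}
    (h : ∀ k, x k ≤ y k + δ) : ∑ k, q k * x k ≤ ∑ k, q k * y k + δ :=
  calc ∑ k, q k * x k ≤ ∑ k, q k * (y k + δ) :=
        sum_le_sum fun k _ => mul_le_mul_of_nonneg_left (h k) (hq.1 k)
    _ = ∑ k, q k * y k + δ := by simp only [mul_add, sum_add_distrib, ← sum_mul, hq.2, one_mul]

end MixedStrategy

theorem sum_Icc_le_of_le_one {g : ℕ → ℝ} (hg : ∀ s, g s ≤ 1) (t : ℕ) : ∑ s ∈ Icc 1 t, g s ≤ t :=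
  (sum_le_card_nsmul _ _ 1 fun s _ => hg s).trans (by simp)

theorem sum_Icc_ite_lt_le (t₀ t : ℕ) {b : ℝ} (hb : 0 ≤ b) :
    ∑ s ∈ Icc 1 t, (if s < t₀ then 1 else b) ≤ t₀ + b * t := by
  have hfirst : #{s ∈ Icc 1 t | s < t₀} ≤ t₀ :=
    (card_le_card fun s hs => mem_range.2 (mem_filter.1 hs).2).trans (card_range t₀).le
  have hrest : #{s ∈ Icc 1 t | ¬s < t₀} ≤ t :=
    (card_filter_le _ _).trans (Nat.card_Icc 1 t).le
  rw [sum_ite, sum_const, sum_const, nsmul_eq_mul, nsmul_eq_mul, mul_one, mul_comm b]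
  gcongr

theorem eventually_sum_Icc_ite_div_lt (t₀ : ℕ) {b d : ℝ} (hb : 0 ≤ b) (hd : 0 < d) :
    ∀ᶠ t : ℕ in atTop, (∑ s ∈ Icc 1 t, if s < t₀ then (1 : ℝ) else b) / t < b + d := by
  filter_upwards [(tendsto_const_div_atTop_nhds_zero_nat (t₀ : ℝ)).eventually_lt_const hd,
    eventually_gt_atTop 0] with t ht₀t ht
  calc (∑ s ∈ Icc 1 t, if s < t₀ then (1 : ℝ) else b) / t ≤ (t₀ + b * t) / t := by
        gcongr
        exact sum_Icc_ite_lt_le t₀ t hb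
    _ = t₀ / t + b := by field_simp
    _ < b + d := by linarith

section EmpiricalFrequency

variable {κ : Type*} [Fintype κ] [DecidableEq κ]

noncomputable def empiricalFreq (f : ℕ → κ) (t : ℕ) (k : κ) : ℝ :=
  (#{s ∈ Icc 1 t | f s = k} : ℝ) / t

theorem sum_empiricalFreq_mul (f : ℕ → κ) (t : ℕ) (g : κ → ℝ) :
    ∑ k, empiricalFreq f t k * g k = (∑ s ∈ Icc 1 t, g (f s)) / t := by
  simp only [empiricalFreq, div_mul_eq_mul_div, ← sum_div, ← sum_fiberwise' (Icc 1 t) f g,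
    sum_const, nsmul_eq_mul]

theorem sum_empiricalFreq_mul_mem_Icc (f : ℕ → κ) (t : ℕ) {g : κ → ℝ}
    (hg : ∀ k, g k ∈ Set.Icc 0 1) :
    ∑ k, empiricalFreq f t k * g k ∈ Set.Icc 0 1 := by
  rw [sum_empiricalFreq_mul]
  exact ⟨div_nonneg (sum_nonneg fun s _ => (hg (f s)).1) t.cast_nonneg,
    div_le_one_of_le₀ (sum_Icc_le_of_le_one (fun s => (hg (f s)).2) t) t.cast_nonneg⟩

end EmpiricalFrequency

section RepeatedGame

variable {A B : Type*}

noncomputable def observedRegret₁ [Fintype A] [Nonempty A] (ahat : ℕ → A → B → ℝ) (i : ℕ → A)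
    (j : ℕ → B) (t : ℕ) : ℝ :=
  ((univ.sup' univ_nonempty fun i₀ => ∑ s ∈ Icc 1 t, ahat s i₀ (j s))
    - ∑ s ∈ Icc 1 t, ahat s (i s) (j s)) / t

noncomputable def observedRegret₂ [Fintype B] [Nonempty B] (ahat : ℕ → A → B → ℝ) (i : ℕ → A)
    (j : ℕ → B) (t : ℕ) : ℝ :=
  ((∑ s ∈ Icc 1 t, ahat s (i s) (j s))
    - univ.inf' univ_nonempty fun j₀ => ∑ s ∈ Icc 1 t, ahat s (i s) j₀) / t

variable {a : A → B → ℝ} {ahat : ℕ → A → B → ℝ} {δ : ℕ → ℝ} {v : ℝ} {i : ℕ → A} {j : ℕ → B}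

theorem inf'_sum_le_card_mul_add [Fintype B] [Nonempty B] {qstar : B → ℝ}
    (hq : qstar ∈ stdSimplex ℝ B) (hqv : ∀ i, ∑ j, qstar j * a i j ≤ v)
    (hδ : ∀ s i₀ j₀, |ahat s i₀ j₀ - a i₀ j₀| ≤ δ s) (T : Finset ℕ) :
    univ.inf' univ_nonempty (fun j₀ => ∑ s ∈ T, ahat s (i s) j₀) ≤ #T * v + ∑ s ∈ T, δ s :=
  calc univ.inf' univ_nonempty (fun j₀ => ∑ s ∈ T, ahat s (i s) j₀)
      ≤ ∑ j₀, qstar j₀ * ∑ s ∈ T, ahat s (i s) j₀ := inf'_le_sum_mul hq _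
    _ = ∑ s ∈ T, ∑ j₀, qstar j₀ * ahat s (i s) j₀ := by simp only [mul_sum]; exact sum_comm
    _ ≤ ∑ s ∈ T, (v + δ s) := sum_le_sum fun s _ =>
        (sum_mul_le_sum_mul_add hq fun j₀ =>
          sub_le_iff_le_add'.1 (abs_sub_le_iff.1 (hδ s (i s) j₀)).1).trans
          (add_le_add_left (hqv (i s)) _)
    _ = #T * v + ∑ s ∈ T, δ s := by rw [sum_add_distrib, sum_const, nsmul_eq_mul]

theorem card_mul_sub_le_sup'_sum [Fintype A] [Nonempty A] {pstar : A → ℝ}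
    (hp : pstar ∈ stdSimplex ℝ A) (hpv : ∀ j, v ≤ ∑ i, pstar i * a i j)
    (hδ : ∀ s i₀ j₀, |ahat s i₀ j₀ - a i₀ j₀| ≤ δ s) (T : Finset ℕ) :
    #T * v - ∑ s ∈ T, δ s ≤ univ.sup' univ_nonempty (fun i₀ => ∑ s ∈ T, ahat s i₀ (j s)) :=
  calc #T * v - ∑ s ∈ T, δ s = ∑ s ∈ T, (v - δ s) := by
        rw [sum_sub_distrib, sum_const, nsmul_eq_mul]
    _ ≤ ∑ s ∈ T, ∑ i₀, pstar i₀ * ahat s i₀ (j s) := sum_le_sum fun s _ => by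
        have := sum_mul_le_sum_mul_add hp (x := fun i₀ => a i₀ (j s)) fun i₀ =>
          sub_le_iff_le_add'.1 (abs_sub_le_iff.1 (hδ s i₀ (j s))).2
        linarith [hpv (j s)]
    _ = ∑ i₀, pstar i₀ * ∑ s ∈ T, ahat s i₀ (j s) := by simp only [mul_sum]; exact sum_comm
    _ ≤ univ.sup' univ_nonempty (fun i₀ => ∑ s ∈ T, ahat s i₀ (j s)) := sum_mul_le_sup' hp _

theorem sum_le_card_mul_add_sup'_sub_inf' [Fintype A] [Fintype B] [Nonempty A] [Nonempty B]
    {qstar : B → ℝ} (hq : qstar ∈ stdSimplex ℝ B) (hqv : ∀ i, ∑ j, qstar j * a i j ≤ v)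
    (hδ : ∀ s i₀ j₀, |ahat s i₀ j₀ - a i₀ j₀| ≤ δ s) (T : Finset ℕ) (i₀ : A) :
    ∑ s ∈ T, a i₀ (j s) ≤ #T * v + ((univ.sup' univ_nonempty fun i' => ∑ s ∈ T, ahat s i' (j s))
      - univ.inf' univ_nonempty fun j' => ∑ s ∈ T, ahat s (i s) j') + 2 * ∑ s ∈ T, δ s := by
  have hobserved : ∑ s ∈ T, a i₀ (j s) ≤ ∑ s ∈ T, ahat s i₀ (j s) + ∑ s ∈ T, δ s := by
    rw [← sum_add_distrib]
    exact sum_le_sum fun s _ => sub_le_iff_le_add'.1 (abs_sub_le_iff.1 (hδ s i₀ (j s))).2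
  have hsup := le_sup' (fun i' => ∑ s ∈ T, ahat s i' (j s)) (mem_univ i₀)
  have hinf := inf'_sum_le_card_mul_add (i := i) hq hqv hδ T
  linarith

theorem card_mul_sub_sup'_sub_inf'_le_sum [Fintype A] [Fintype B] [Nonempty A] [Nonempty B]
    {pstar : A → ℝ} (hp : pstar ∈ stdSimplex ℝ A) (hpv : ∀ j, v ≤ ∑ i, pstar i * a i j)
    (hδ : ∀ s i₀ j₀, |ahat s i₀ j₀ - a i₀ j₀| ≤ δ s) (T : Finset ℕ) (j₀ : B) :
    #T * v - ((univ.sup' univ_nonempty fun i' => ∑ s ∈ T, ahat s i' (j s))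
      - univ.inf' univ_nonempty fun j' => ∑ s ∈ T, ahat s (i s) j') - 2 * ∑ s ∈ T, δ s
      ≤ ∑ s ∈ T, a (i s) j₀ := by
  have hobserved : ∑ s ∈ T, ahat s (i s) j₀ ≤ ∑ s ∈ T, a (i s) j₀ + ∑ s ∈ T, δ s := by
    rw [← sum_add_distrib]
    exact sum_le_sum fun s _ => sub_le_iff_le_add'.1 (abs_sub_le_iff.1 (hδ s (i s) j₀)).1
  have hinf := inf'_le (fun j' => ∑ s ∈ T, ahat s (i s) j') (mem_univ j₀)
  have hsup := card_mul_sub_le_sup'_sum (j := j) hp hpv hδ T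
  linarith

theorem sup'_sum_empiricalFreq_mul_le [Fintype A] [Fintype B] [Nonempty A] [Nonempty B]
    [DecidableEq B] {qstar : B → ℝ} (hq : qstar ∈ stdSimplex ℝ B)
    (hqv : ∀ i, ∑ j, qstar j * a i j ≤ v) (hδ : ∀ s i₀ j₀, |ahat s i₀ j₀ - a i₀ j₀| ≤ δ s)
    {t : ℕ} (ht : 0 < t) :
    univ.sup' univ_nonempty (fun i₀ => ∑ j₀, empiricalFreq j t j₀ * a i₀ j₀) ≤
      v + (observedRegret₁ ahat i j t + observedRegret₂ ahat i j t
        + 2 * ((∑ s ∈ Icc 1 t, δ s) / t)) := by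
  refine sup'_le _ _ fun i₀ _ => ?_
  have := sum_le_card_mul_add_sup'_sub_inf' (i := i) (j := j) hq hqv hδ (Icc 1 t) i₀
  rw [sum_empiricalFreq_mul, div_le_iff₀ (by exact_mod_cast ht)]
  refine this.trans_eq ?_
  rw [Nat.card_Icc, add_tsub_cancel_right, observedRegret₁, observedRegret₂]
  field_simp
  ring

theorem le_inf'_sum_empiricalFreq_mul [Fintype A] [Fintype B] [Nonempty A] [Nonempty B]
    [DecidableEq A] {pstar : A → ℝ} (hp : pstar ∈ stdSimplex ℝ A)
    (hpv : ∀ j, v ≤ ∑ i, pstar i * a i j) (hδ : ∀ s i₀ j₀, |ahat s i₀ j₀ - a i₀ j₀| ≤ δ s)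
    {t : ℕ} (ht : 0 < t) :
    v - (observedRegret₁ ahat i j t + observedRegret₂ ahat i j t
        + 2 * ((∑ s ∈ Icc 1 t, δ s) / t)) ≤
      univ.inf' univ_nonempty (fun j₀ => ∑ i₀, empiricalFreq i t i₀ * a i₀ j₀) := by
  refine le_inf' _ _ fun j₀ _ => ?_
  have := card_mul_sub_sup'_sub_inf'_le_sum (i := i) (j := j) hp hpv hδ (Icc 1 t) j₀
  rw [sum_empiricalFreq_mul, le_div_iff₀ (by exact_mod_cast ht)]
  refine le_of_eq_of_le ?_ this
  rw [Nat.card_Icc, add_tsub_cancel_right, observedRegret₁, observedRegret₂]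
  field_simp
  ring

theorem abs_sub_le_ite_of_forall_ge (ha : ∀ i j, a i j ∈ Set.Icc 0 1)
    (hahat : ∀ s i₀ j₀, ahat s i₀ j₀ ∈ Set.Icc 0 1) {t₀ : ℕ} {b : ℝ}
    (ht₀ : ∀ s ≥ t₀, ∀ i₀ j₀, |ahat s i₀ j₀ - a i₀ j₀| ≤ b) (s : ℕ) (i₀ : A) (j₀ : B) :
    |ahat s i₀ j₀ - a i₀ j₀| ≤ if s < t₀ then 1 else b := by
  split_ifs with hs
  · exact abs_sub_le_of_nonneg_of_le (hahat s i₀ j₀).1 (hahat s i₀ j₀).2 (ha i₀ j₀).1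
      (ha i₀ j₀).2
  · exact ht₀ s (not_lt.1 hs) i₀ j₀

theorem observedRegret₁_le_one [Fintype A] [Nonempty A]
    (hahat : ∀ s i₀ j₀, ahat s i₀ j₀ ∈ Set.Icc 0 1) (i : ℕ → A) (j : ℕ → B) (t : ℕ) :
    observedRegret₁ ahat i j t ≤ 1 := by
  have hsup : (univ.sup' univ_nonempty fun i₀ => ∑ s ∈ Icc 1 t, ahat s i₀ (j s)) ≤ t :=
    sup'_le _ _ fun i₀ _ => sum_Icc_le_of_le_one (fun s => (hahat s i₀ (j s)).2) t
  have hplayed : 0 ≤ ∑ s ∈ Icc 1 t, ahat s (i s) (j s) :=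
    sum_nonneg fun s _ => (hahat s (i s) (j s)).1
  exact div_le_one_of_le₀ (by linarith) t.cast_nonneg

theorem observedRegret₂_le_one [Fintype B] [Nonempty B]
    (hahat : ∀ s i₀ j₀, ahat s i₀ j₀ ∈ Set.Icc 0 1) (i : ℕ → A) (j : ℕ → B) (t : ℕ) :
    observedRegret₂ ahat i j t ≤ 1 := by
  have hplayed : ∑ s ∈ Icc 1 t, ahat s (i s) (j s) ≤ t :=
    sum_Icc_le_of_le_one (fun s => (hahat s (i s) (j s)).2) t
  have hinf : 0 ≤ univ.inf' univ_nonempty fun j₀ => ∑ s ∈ Icc 1 t, ahat s (i s) j₀ :=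
    le_inf' _ _ fun j₀ _ => sum_nonneg fun s _ => (hahat s (i s) j₀).1
  exact div_le_one_of_le₀ (by linarith) t.cast_nonneg

theorem isCoboundedUnder_le_sup'_sum_empiricalFreq_mul [Fintype A] [Fintype B] [Nonempty A]
    [DecidableEq B] (ha : ∀ i j, a i j ∈ Set.Icc 0 1) (j : ℕ → B) :
    IsCoboundedUnder (· ≤ ·) atTop
      fun t => univ.sup' univ_nonempty fun i₀ => ∑ j₀, empiricalFreq j t j₀ * a i₀ j₀ :=
  (isBoundedUnder_of ⟨0, fun t => le_sup'_of_le _ (mem_univ (Classical.arbitrary A))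
    (sum_empiricalFreq_mul_mem_Icc j t (ha _)).1⟩).isCoboundedUnder_flip

theorem isCoboundedUnder_ge_inf'_sum_empiricalFreq_mul [Fintype A] [Fintype B] [Nonempty B]
    [DecidableEq A] (ha : ∀ i j, a i j ∈ Set.Icc 0 1) (i : ℕ → A) :
    IsCoboundedUnder (· ≥ ·) atTop
      fun t => univ.inf' univ_nonempty fun j₀ => ∑ i₀, empiricalFreq i t i₀ * a i₀ j₀ :=
  (isBoundedUnder_of ⟨1, fun t => inf'_le_of_le _ (mem_univ (Classical.arbitrary B))
    (sum_empiricalFreq_mul_mem_Icc i t fun i₀ => ha i₀ _).2⟩).isCoboundedUnder_flip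

end RepeatedGame

/-- **Proposition 6, inequalities (7).**  In a repeated game with error `cε`, if both
players' observed average regrets have `limsup ≤ ε`, then the best-response utilities
(with respect to the exact payoff matrix `a`) against the empirical frequencies satisfy
`liminf u(σ̂₁(t), br) ≥ v − 2(c+1)ε` and `limsup u(br, σ̂₂(t)) ≤ v + 2(c+1)ε`. -/
theorem stmt_5 {A B : Type*} [Fintype A] [Fintype B] [Nonempty A] [Nonempty B]
    [DecidableEq A] [DecidableEq B]
    (a : A → B → ℝ) (ha : ∀ i j, a i j ∈ Set.Icc (0 : ℝ) 1)
    (ε c : ℝ) (hε : 0 ≤ ε) (hc : 0 ≤ c) (v : ℝ)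
    (pstar : A → ℝ) (hp0 : ∀ i, 0 ≤ pstar i) (hp1 : ∑ i, pstar i = 1)
    (qstar : B → ℝ) (hq0 : ∀ j, 0 ≤ qstar j) (hq1 : ∑ j, qstar j = 1)
    (hpv : ∀ j, v ≤ ∑ i, pstar i * a i j)
    (hqv : ∀ i, ∑ j, qstar j * a i j ≤ v)
    (i : ℕ → A) (j : ℕ → B)
    (ahat : ℕ → A → B → ℝ)
    (hahat01 : ∀ s i₀ j₀, ahat s i₀ j₀ ∈ Set.Icc (0 : ℝ) 1)
    (herr : ∃ t₀ : ℕ, ∀ s ≥ t₀, ∀ i₀ j₀, |ahat s i₀ j₀ - a i₀ j₀| ≤ c * ε)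
    (r₁ r₂ : ℕ → ℝ)
    (hr₁ : ∀ t, r₁ t =
      ((univ.sup' univ_nonempty fun i₀ => ∑ s ∈ Finset.Icc 1 t, ahat s i₀ (j s))
        - ∑ s ∈ Finset.Icc 1 t, ahat s (i s) (j s)) / t)
    (hr₂ : ∀ t, r₂ t =
      ((∑ s ∈ Finset.Icc 1 t, ahat s (i s) (j s))
        - univ.inf' univ_nonempty fun j₀ => ∑ s ∈ Finset.Icc 1 t, ahat s (i s) j₀) / t)
    (h1 : limsup r₁ atTop ≤ ε)
    (h2 : limsup r₂ atTop ≤ ε)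
    (σ₁ : ℕ → A → ℝ) (σ₂ : ℕ → B → ℝ)
    (hσ₁ : ∀ t i₀, σ₁ t i₀ = (((Finset.Icc 1 t).filter (fun s => i s = i₀)).card : ℝ) / t)
    (hσ₂ : ∀ t j₀, σ₂ t j₀ = (((Finset.Icc 1 t).filter (fun s => j s = j₀)).card : ℝ) / t) :
    v - 2 * (c + 1) * ε ≤
      liminf (fun t => univ.inf' univ_nonempty fun j₀ => ∑ i₀, σ₁ t i₀ * a i₀ j₀) atTop ∧
    limsup (fun t => univ.sup' univ_nonempty fun i₀ => ∑ j₀, σ₂ t j₀ * a i₀ j₀) atTop ≤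
      v + 2 * (c + 1) * ε := by
  obtain ⟨t₀, ht₀⟩ := herr
  obtain rfl : σ₁ = empiricalFreq i := funext₂ hσ₁
  obtain rfl : σ₂ = empiricalFreq j := funext₂ hσ₂
  obtain rfl : r₁ = observedRegret₁ ahat i j := funext hr₁
  obtain rfl : r₂ = observedRegret₂ ahat i j := funext hr₂
  have hδ := abs_sub_le_ite_of_forall_ge ha hahat01 ht₀
  have hslack : ∀ d > 0, ∀ᶠ t in atTop, observedRegret₁ ahat i j t + observedRegret₂ ahat i j t
      + 2 * ((∑ s ∈ Icc 1 t, if s < t₀ then 1 else c * ε) / t) < 2 * (c + 1) * ε + d := by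
    intro d hd
    have hε₃ : ε < ε + d / 3 := by linarith
    filter_upwards [eventually_lt_of_limsup_lt (h1.trans_lt hε₃)
        (isBoundedUnder_of ⟨1, observedRegret₁_le_one hahat01 i j⟩),
      eventually_lt_of_limsup_lt (h2.trans_lt hε₃)
        (isBoundedUnder_of ⟨1, observedRegret₂_le_one hahat01 i j⟩),
      eventually_sum_Icc_ite_div_lt t₀ (mul_nonneg hc hε) (by positivity : 0 < d / 6)]
      with t hr₁t hr₂t herror
    linarith
  constructor
  · refine le_of_forall_sub_le fun d hd =>
      le_liminf_of_le (isCoboundedUnder_ge_inf'_sum_empiricalFreq_mul ha i) ?_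
    filter_upwards [hslack d hd, eventually_gt_atTop 0] with t hlt ht
    linarith [le_inf'_sum_empiricalFreq_mul ⟨hp0, hp1⟩ hpv hδ (i := i) (j := j) ht]
  · refine le_of_forall_pos_le_add fun d hd =>
      limsup_le_of_le (isCoboundedUnder_le_sup'_sum_empiricalFreq_mul ha j) ?_
    filter_upwards [hslack d hd, eventually_gt_atTop 0] with t hlt ht
    linarith [sup'_sum_empiricalFreq_mul_le ⟨hq0, hq1⟩ hqv hδ (i := i) (j := j) ht]
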